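/- arXiv:1612.08051 — 7 statements merged into one kernel-verified Lean document; each statement's English description precedes it below -/
import Mathlib

section
/- Let R be a Poisson algebra over a field K. Then the upper Lie powers R^(n), defined by R^(0) = R and R^(n) = {R^(n-1), R}·R for n ≥ 1, satisfy R^(i)·R^(j) ⊆ R^(i+j) for all i, j ≥ 0. -/
/-- A Poisson algebra structure on a commutative `K`-algebra `R`:
a `K`-bilinear bracket which is antisymmetric, satisfies the Jacobi identity
and the Leibniz rule. -/
structure PoissonStr (K R : Type*) [Field K] [CommRing R] [Algebra K R] where
  bracket : R →ₗ[K] R →ₗ[K] R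
  antisymm : ∀ a b : R, bracket a b = - bracket b a
  jacobi : ∀ a b c : R,
    bracket (bracket a b) c + bracket (bracket b c) a + bracket (bracket c a) b = 0
  leibniz : ∀ a b c : R, bracket (a * b) c = a * bracket b c + b * bracket a c

namespace PoissonStr

variable {K R : Type*} [Field K] [CommRing R] [Algebra K R]

/-- The span `{M, N}` of brackets of elements of two subspaces. -/
def sBr (P : PoissonStr K R) (M N : Submodule K R) : Submodule K R :=
  Submodule.span K {z : R | ∃ m ∈ M, ∃ n ∈ N, z = P.bracket m n}

/-- Upper Lie powers: `R^(0) = R`, `R^(n+1) = {R^(n), R}·R`. -/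
def upper (P : PoissonStr K R) : ℕ → Submodule K R
  | 0 => ⊤
  | n + 1 => P.sBr (upper P n) ⊤ * ⊤

/-- Lower central series of `R` as a Lie algebra: `γ_1 = R`,
`γ_{n+1} = {γ_n, R}` (with the convention `γ_0 = R`). -/
def gamma (P : PoissonStr K R) : ℕ → Submodule K R
  | 0 => ⊤
  | 1 => ⊤
  | n + 2 => P.sBr (gamma P (n + 1)) ⊤

/-- Derived series of `R` as a Lie algebra. -/
def derived (P : PoissonStr K R) : ℕ → Submodule K R
  | 0 => ⊤
  | n + 1 => P.sBr (derived P n) (derived P n)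

/-- Upper derived series: `δ̃_0 = R`, `δ̃_{n+1} = {δ̃_n, δ̃_n}·R`. -/
def uderived (P : PoissonStr K R) : ℕ → Submodule K R
  | 0 => ⊤
  | n + 1 => P.sBr (uderived P n) (uderived P n) * ⊤

end PoissonStr


namespace PoissonStr

variable {K R : Type*} [Field K] [CommRing R] [Algebra K R] (P : PoissonStr K R)

lemma bracket_mem_sBr {M N : Submodule K R} {m n : R} (hm : m ∈ M) (hn : n ∈ N) :
    P.bracket m n ∈ P.sBr M N :=
  Submodule.subset_span ⟨m, hm, n, hn, rfl⟩

lemma sBr_mono {M M' N N' : Submodule K R} (h1 : M ≤ M') (h2 : N ≤ N') :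
    P.sBr M N ≤ P.sBr M' N' := by
  apply Submodule.span_mono
  rintro z ⟨m, hm, n, hn, rfl⟩
  exact ⟨m, h1 hm, n, h2 hn, rfl⟩

lemma le_mul_top (M : Submodule K R) : M ≤ M * ⊤ := fun m hm => by
  simpa using Submodule.mul_mem_mul hm (Submodule.mem_top (x := (1:R)))

lemma top_mul_top : (⊤ : Submodule K R) * ⊤ = ⊤ :=
  le_antisymm le_top (le_mul_top _)

lemma upper_mul_top : ∀ n, P.upper n * ⊤ = P.upper n
  | 0 => top_mul_top
  | n + 1 => by
    show P.sBr (P.upper n) ⊤ * ⊤ * ⊤ = _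
    rw [mul_assoc, top_mul_top]
    rfl

lemma sBr_le_upper_succ (n : ℕ) : P.sBr (P.upper n) ⊤ ≤ P.upper (n + 1) :=
  le_mul_top _

/-- Key identity at the level of subspaces:
`{M,R}·{N,R} ⊆ {M·{N,R}, R} + M·{{N,R}, R}`. -/
lemma sBr_mul_sBr (M N : Submodule K R) :
    P.sBr M ⊤ * P.sBr N ⊤ ≤
      P.sBr (M * P.sBr N ⊤) ⊤ + M * P.sBr (P.sBr N ⊤) ⊤ := by
  rw [Submodule.mul_le]
  intro x hx y hy
  induction hx using Submodule.span_induction with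
  | mem x hx =>
    obtain ⟨v, hv, s, -, rfl⟩ := hx
    have hkey : P.bracket v s * y = P.bracket (v * y) s - v * P.bracket y s := by
      rw [P.leibniz v y s]; ring
    rw [hkey]
    apply sub_mem
    · exact le_sup_left (α := Submodule K R) <|
        P.bracket_mem_sBr (Submodule.mul_mem_mul hv hy) Submodule.mem_top
    · exact le_sup_right (α := Submodule K R) <|
        Submodule.mul_mem_mul hv (P.bracket_mem_sBr hy Submodule.mem_top)
  | zero => simp
  | add a b _ _ ha hb => rw [add_mul]; exact add_mem ha hb
  | smul k a _ ha => rw [smul_mul_assoc]; exact Submodule.smul_mem _ _ ha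

lemma key : ∀ n a b : ℕ, a + b = n →
    P.upper b * P.sBr (P.upper a) ⊤ ≤ P.upper (n + 1) := by
  intro n
  induction n using Nat.strong_induction_on with
  | _ n ih =>
    intro a b
    induction b generalizing a with
    | zero =>
      intro h
      rw [Nat.add_zero] at h
      subst h
      show (⊤ : Submodule K R) * _ ≤ _
      rw [mul_comm]
      exact le_of_eq rfl
    | succ b ihb =>
      intro h
      have hn : n = a + b + 1 := by omega
      show P.sBr (P.upper b) ⊤ * ⊤ * P.sBr (P.upper a) ⊤ ≤ P.upper (n + 1)
      rw [mul_right_comm]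
      have h1 : P.sBr (P.upper b) ⊤ * P.sBr (P.upper a) ⊤ ≤ P.upper (n + 1) := by
        refine le_trans (P.sBr_mul_sBr _ _) (sup_le ?_ ?_)
        · have hprev : P.upper b * P.sBr (P.upper a) ⊤ ≤ P.upper n := by
            have := ih (a + b) (by omega) a b rfl
            rwa [show a + b + 1 = n by omega] at this
          exact le_trans (P.sBr_mono hprev le_rfl) (P.sBr_le_upper_succ n)
        · have hS : P.sBr (P.upper a) ⊤ ≤ P.upper (a + 1) := P.sBr_le_upper_succ a
          refine le_trans (mul_le_mul' le_rfl
            (P.sBr_mono hS le_rfl)) ?_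
          have : P.sBr (P.upper (a+1)) ⊤ ≤ P.sBr (P.upper (a+1)) ⊤ := le_rfl
          exact ihb (a + 1) (by omega)
      calc P.sBr (P.upper b) ⊤ * P.sBr (P.upper a) ⊤ * ⊤
          ≤ P.upper (n + 1) * ⊤ := mul_le_mul' h1 le_rfl
        _ = P.upper (n + 1) := P.upper_mul_top _

end PoissonStr

/-- `R^(i) · R^(j) ⊆ R^(i+j)` for all `i, j ≥ 0`. -/
theorem upper_mul_upper_le {K R : Type*} [Field K] [CommRing R] [Algebra K R]
    (P : PoissonStr K R) :
    ∀ i j : ℕ, P.upper i * P.upper j ≤ P.upper (i + j) := by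
  intro i j
  induction j with
  | zero => rw [Nat.add_zero]; exact le_of_eq (P.upper_mul_top i)
  | succ j _ =>
    show P.upper i * (P.sBr (P.upper j) ⊤ * ⊤) ≤ _
    rw [← mul_assoc]
    calc P.upper i * P.sBr (P.upper j) ⊤ * ⊤
        ≤ P.upper (j + i + 1) * ⊤ :=
          mul_le_mul' (P.key (j + i) j i rfl) le_rfl
      _ = P.upper (i + (j + 1)) := by rw [P.upper_mul_top, show j+i+1 = i+(j+1) by omega]
end

section
/- Let R be a Poisson algebra, m ≥ 1, a_5 ∈ γ_m(R), and a_1, a_2, a_3, a_4 ∈ R. Then {a_1,a_2,a_3}{a_4,a_5} + {a_1,a_4,a_3}{a_2,a_5} ∈ γ_{m+3}(R)·R, where brackets are left-normed. -/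
namespace PoissonStr

variable {K R : Type*} [Field K] [CommRing R] [Algebra K R]

lemma mem_sBr (P : PoissonStr K R) {M : Submodule K R} {x : R} (hx : x ∈ M) (y : R) :
    P.bracket x y ∈ P.sBr M ⊤ :=
  Submodule.subset_span ⟨x, hx, y, Submodule.mem_top, rfl⟩

lemma bracket_gamma (P : PoissonStr K R) (q : ℕ) :
    ∀ (p : ℕ) (x y : R), x ∈ P.gamma (p+1) → y ∈ P.gamma (q+1) →
      P.bracket x y ∈ P.gamma (p+q+2) := by
  induction q with
  | zero => intro p x y hx _; exact P.mem_sBr hx y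
  | succ q ih =>
    intro p x y hx hy
    have hsub : P.sBr (P.gamma (q+1)) ⊤ ≤
        Submodule.comap (P.bracket x) (P.gamma (p+(q+1)+2)) := by
      apply Submodule.span_le.2
      rintro _ ⟨z, hz, w, -, rfl⟩
      simp only [SetLike.mem_coe, Submodule.mem_comap]
      have key : P.bracket x (P.bracket z w)
          = P.bracket (P.bracket x z) w + P.bracket (P.bracket w x) z := by
        have hj := P.jacobi x z w
        have ha := P.antisymm x (P.bracket z w)
        linear_combination ha - hj
      rw [key]
      refine add_mem ?_ ?_
      · exact P.mem_sBr (ih p x z hx hz) w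
      · have hwx : P.bracket w x ∈ P.gamma (p+1+1) := by
          rw [P.antisymm w x]
          exact neg_mem (P.mem_sBr hx w)
        have := ih (p+1) _ z hwx hz
        rwa [show p+1+q+2 = p+(q+1)+2 from by omega] at this
    exact hsub hy

lemma E_eq (P : PoissonStr K R) (a b c d : R) :
    P.bracket a d * P.bracket b c + P.bracket b d * P.bracket a c
      = P.bracket (P.bracket (a*b) c) d - a * P.bracket (P.bracket b c) d
        - b * P.bracket (P.bracket a c) d := by
  have h2 : P.bracket (P.bracket (a*b) c) d
      = P.bracket (a * P.bracket b c) d + P.bracket (b * P.bracket a c) d := by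
    rw [P.leibniz a b c]; simp
  have h3 := P.leibniz a (P.bracket b c) d
  have h4 := P.leibniz b (P.bracket a c) d
  linear_combination -h2 - h3 - h4

lemma memMulTop (P : PoissonStr K R) (n : ℕ) {x : R} (hx : x ∈ P.gamma n) (a : R) :
    a * x ∈ P.gamma n * ⊤ := by
  rw [mul_comm a x]
  exact Submodule.mul_mem_mul hx Submodule.mem_top

lemma memSelfMulTop (P : PoissonStr K R) (n : ℕ) {x : R} (hx : x ∈ P.gamma n) :
    x ∈ P.gamma n * ⊤ := by
  simpa using Submodule.mul_mem_mul hx (Submodule.mem_top (x := (1:R)))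

lemma L2 (P : PoissonStr K R) (k : ℕ) {c : R} (hc : c ∈ P.gamma (k+1)) (a b d : R) :
    P.bracket a d * P.bracket b c + P.bracket b d * P.bracket a c
      ∈ P.gamma (k+3) * ⊤ := by
  rw [P.E_eq a b c d]
  have m1 : P.bracket (P.bracket (a*b) c) d ∈ P.gamma (k+3) := by
    have h : P.bracket (a*b) c ∈ P.gamma (k+2) := by
      rw [P.antisymm (a*b) c]; exact neg_mem (P.mem_sBr hc (a*b))
    exact P.mem_sBr h d
  have m2 : P.bracket (P.bracket b c) d ∈ P.gamma (k+3) := by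
    have h : P.bracket b c ∈ P.gamma (k+2) := by
      rw [P.antisymm b c]; exact neg_mem (P.mem_sBr hc b)
    exact P.mem_sBr h d
  have m3 : P.bracket (P.bracket a c) d ∈ P.gamma (k+3) := by
    have h : P.bracket a c ∈ P.gamma (k+2) := by
      rw [P.antisymm a c]; exact neg_mem (P.mem_sBr hc a)
    exact P.mem_sBr h d
  exact sub_mem (sub_mem (P.memSelfMulTop _ m1) (P.memMulTop _ m2 a)) (P.memMulTop _ m3 b)


end PoissonStr

/-- if `a₅ ∈ γ_m(R)` (`m ≥ 1`) then
`{a₁,a₂,a₃}{a₄,a₅} + {a₁,a₄,a₃}{a₂,a₅} ∈ γ_{m+3}(R)·R`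
(brackets left-normed). -/
theorem perm_lemma_two {K R : Type*} [Field K] [CommRing R] [Algebra K R]
    (P : PoissonStr K R) (m : ℕ) (hm : 1 ≤ m) (a1 a2 a3 a4 a5 : R)
    (h : a5 ∈ P.gamma m) :
    P.bracket (P.bracket a1 a2) a3 * P.bracket a4 a5
      + P.bracket (P.bracket a1 a4) a3 * P.bracket a2 a5
      ∈ P.gamma (m + 3) * ⊤ := by
  obtain ⟨k, rfl⟩ : ∃ k, m = k + 1 := ⟨m - 1, by omega⟩
  have hu : P.bracket a2 a5 ∈ P.gamma (k+2) := by
    rw [P.antisymm a2 a5]; exact neg_mem (P.mem_sBr h a2)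
  have hv : P.bracket a4 a5 ∈ P.gamma (k+2) := by
    rw [P.antisymm a4 a5]; exact neg_mem (P.mem_sBr h a4)
  have hc : P.bracket a1 a5 ∈ P.gamma (k+2) := by
    rw [P.antisymm a1 a5]; exact neg_mem (P.mem_sBr h a1)
  have hY : P.bracket a1 a2 * a4 + P.bracket a1 a4 * a2 ∈ P.gamma 2 := by
    have heq : P.bracket a1 a2 * a4 + P.bracket a1 a4 * a2
        = - P.bracket (a2*a4) a1 := by
      have h1 := P.leibniz a2 a4 a1
      have h2 := P.antisymm a4 a1
      have h3 := P.antisymm a2 a1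
      linear_combination h1 + a2*h2 + a4*h3
    rw [heq]
    exact neg_mem (P.mem_sBr Submodule.mem_top a1)
  have ht1 : P.bracket (P.bracket (P.bracket a1 a2 * a4 + P.bracket a1 a4 * a2) a5) a3
      ∈ P.gamma (k+1+3) := by
    have := P.bracket_gamma k 1 _ a5 hY h
    rw [show 1+k+2 = k+3 from by omega] at this
    exact P.mem_sBr this a3
  have hX2 : P.bracket (P.bracket (P.bracket a1 a2) a5) a3 ∈ P.gamma (k+1+3) := by
    have hA : P.bracket a1 a2 ∈ P.gamma 2 := P.mem_sBr Submodule.mem_top a2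
    have := P.bracket_gamma k 1 _ a5 hA h
    rw [show 1+k+2 = k+3 from by omega] at this
    exact P.mem_sBr this a3
  have hX3 : P.bracket (P.bracket (P.bracket a1 a4) a5) a3 ∈ P.gamma (k+1+3) := by
    have hA : P.bracket a1 a4 ∈ P.gamma 2 := P.mem_sBr Submodule.mem_top a4
    have := P.bracket_gamma k 1 _ a5 hA h
    rw [show 1+k+2 = k+3 from by omega] at this
    exact P.mem_sBr this a3
  have hG1 := P.L2 (k+1) hc a4 a2 a3
  have hG2 := P.L2 (k+1) hu a3 a1 a4
  have hG3 := P.L2 (k+1) hv a3 a1 a2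
  have key : P.bracket (P.bracket a1 a2) a3 * P.bracket a4 a5
      + P.bracket (P.bracket a1 a4) a3 * P.bracket a2 a5
      = P.bracket (P.bracket (P.bracket a1 a2 * a4 + P.bracket a1 a4 * a2) a5) a3
        - a4 * P.bracket (P.bracket (P.bracket a1 a2) a5) a3
        - a2 * P.bracket (P.bracket (P.bracket a1 a4) a5) a3
        + (P.bracket a4 a3 * P.bracket a2 (P.bracket a1 a5)
            + P.bracket a2 a3 * P.bracket a4 (P.bracket a1 a5))
        + (P.bracket a3 a4 * P.bracket a1 (P.bracket a2 a5)
            + P.bracket a1 a4 * P.bracket a3 (P.bracket a2 a5))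
        + (P.bracket a3 a2 * P.bracket a1 (P.bracket a4 a5)
            + P.bracket a1 a2 * P.bracket a3 (P.bracket a4 a5)) := by
    have hE1 := P.E_eq (P.bracket a1 a2) a4 a5 a3
    have hE2 := P.E_eq (P.bracket a1 a4) a2 a5 a3
    have hYlin : P.bracket (P.bracket (P.bracket a1 a2 * a4 + P.bracket a1 a4 * a2) a5) a3
        = P.bracket (P.bracket (P.bracket a1 a2 * a4) a5) a3
          + P.bracket (P.bracket (P.bracket a1 a4 * a2) a5) a3 := by
      simp
    have e1 : P.bracket (P.bracket a5 a1) a2 = P.bracket a2 (P.bracket a1 a5) := by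
      rw [P.antisymm a5 a1, P.antisymm a2 (P.bracket a1 a5)]; simp
    have e2 : P.bracket (P.bracket a5 a1) a4 = P.bracket a4 (P.bracket a1 a5) := by
      rw [P.antisymm a5 a1, P.antisymm a4 (P.bracket a1 a5)]; simp
    have h1 : P.bracket (P.bracket a1 a2) a5
        = - P.bracket (P.bracket a2 a5) a1 - P.bracket a2 (P.bracket a1 a5) := by
      have hj := P.jacobi a1 a2 a5
      linear_combination hj - e1
    have h2 : P.bracket (P.bracket a1 a4) a5
        = - P.bracket (P.bracket a4 a5) a1 - P.bracket a4 (P.bracket a1 a5) := by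
      have hj := P.jacobi a1 a4 a5
      linear_combination hj - e2
    rw [P.antisymm a3 a4, P.antisymm a3 a2,
        P.antisymm a1 (P.bracket a2 a5), P.antisymm a1 (P.bracket a4 a5),
        P.antisymm a3 (P.bracket a2 a5), P.antisymm a3 (P.bracket a4 a5)]
    linear_combination hE1 + hE2 - hYlin
      - (P.bracket a4 a3) * h1 - (P.bracket a2 a3) * h2
  rw [key]
  exact add_mem (add_mem (add_mem (sub_mem (sub_mem (P.memSelfMulTop _ ht1)
    (P.memMulTop _ hX2 a4)) (P.memMulTop _ hX3 a2)) hG1) hG2) hG3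
end

section
/- Let L be a Lie algebra over a field K. Then Δ(L) = {x ∈ L : dim [L,x] < ∞} is an ideal of L. -/
/-- The adjoint image `[L, x]` of an element of a Lie algebra, as a subspace. -/
def adIm (K L : Type*) [Field K] [LieRing L] [LieAlgebra K L] (x : L) :
    Submodule K L :=
  Submodule.span K {y : L | ∃ z : L, y = ⁅z, x⁆}

/-- The delta-set `Δ_n(L) = {x ∈ L : dim [L,x] ≤ n}`. -/
def deltaSet (K L : Type*) [Field K] [LieRing L] [LieAlgebra K L] (n : ℕ) :
    Set L :=
  {x : L | Module.rank K ↥(adIm K L x) ≤ n}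

/-- The set `Δ(L) = {x ∈ L : dim [L,x] < ∞}` of elements of finite width. -/
def Delta (K L : Type*) [Field K] [LieRing L] [LieAlgebra K L] : Set L :=
  {x : L | Module.Finite K ↥(adIm K L x)}

/-- `adIm K L x` is the range of `ad x`. -/
lemma adIm_eq (K L : Type*) [Field K] [LieRing L] [LieAlgebra K L] (x : L) :
    adIm K L x = LinearMap.range (LieAlgebra.ad K L x) := by
  apply le_antisymm
  · rw [adIm, Submodule.span_le]
    rintro y ⟨z, rfl⟩
    exact ⟨-z, by simp⟩
  · rintro y ⟨z, rfl⟩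
    exact Submodule.subset_span ⟨-z, by simp⟩

lemma mem_Delta_iff {K L : Type*} [Field K] [LieRing L] [LieAlgebra K L] (x : L) :
    x ∈ Delta K L ↔ Module.Finite K ↥(LinearMap.range (LieAlgebra.ad K L x)) := by
  rw [Delta, Set.mem_setOf_eq, adIm_eq]

lemma Delta_zero_mem {K L : Type*} [Field K] [LieRing L] [LieAlgebra K L] :
    (0 : L) ∈ Delta K L := by
  rw [mem_Delta_iff]
  have h : LinearMap.range (LieAlgebra.ad K L (0 : L)) = ⊥ := by
    ext w; simp [LieAlgebra.ad_apply]
  rw [h]; infer_instance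

lemma Delta_add_mem {K L : Type*} [Field K] [LieRing L] [LieAlgebra K L] {a b : L}
    (ha : a ∈ Delta K L) (hb : b ∈ Delta K L) : a + b ∈ Delta K L := by
  rw [mem_Delta_iff] at ha hb ⊢
  have h : LinearMap.range (LieAlgebra.ad K L (a + b)) ≤
      LinearMap.range (LieAlgebra.ad K L a) ⊔ LinearMap.range (LieAlgebra.ad K L b) := by
    rintro y ⟨z, rfl⟩
    have : (LieAlgebra.ad K L (a + b)) z =
        (LieAlgebra.ad K L a) z + (LieAlgebra.ad K L b) z := by
      simp [LieAlgebra.ad_apply, add_lie]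
    rw [this]
    exact Submodule.add_mem_sup ⟨z, rfl⟩ ⟨z, rfl⟩
  haveI : FiniteDimensional K
      ↥(LinearMap.range (LieAlgebra.ad K L a) ⊔ LinearMap.range (LieAlgebra.ad K L b)) :=
    Submodule.finiteDimensional_sup _ _
  exact Submodule.finiteDimensional_of_le h

lemma Delta_smul_mem {K L : Type*} [Field K] [LieRing L] [LieAlgebra K L] (c : K) {a : L}
    (ha : a ∈ Delta K L) : c • a ∈ Delta K L := by
  rw [mem_Delta_iff] at ha ⊢
  have h : LinearMap.range (LieAlgebra.ad K L (c • a)) ≤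
      LinearMap.range (LieAlgebra.ad K L a) := by
    rintro y ⟨z, rfl⟩
    exact ⟨c • z, by simp [LieAlgebra.ad_apply, smul_lie, lie_smul]⟩
  exact Submodule.finiteDimensional_of_le h

lemma Delta_lie_mem {K L : Type*} [Field K] [LieRing L] [LieAlgebra K L] (y : L) {x : L}
    (hx : x ∈ Delta K L) : ⁅y, x⁆ ∈ Delta K L := by
  rw [mem_Delta_iff] at hx ⊢
  set S := LinearMap.range (LieAlgebra.ad K L x) ⊔
    Submodule.map (LieAlgebra.ad K L y) (LinearMap.range (LieAlgebra.ad K L x)) with hS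
  have h : LinearMap.range (LieAlgebra.ad K L ⁅y, x⁆) ≤ S := by
    rintro w ⟨z, rfl⟩
    have he : (LieAlgebra.ad K L ⁅y, x⁆) z = ⁅y, ⁅x, z⁆⁆ - ⁅x, ⁅y, z⁆⁆ := by
      simp only [LieAlgebra.ad_apply]
      rw [lie_lie]
    have h1 : ⁅x, ⁅y, z⁆⁆ ∈ S := le_sup_left (α := Submodule K L) ⟨⁅y, z⁆, rfl⟩
    have h2 : ⁅y, ⁅x, z⁆⁆ ∈ S :=
      le_sup_right (α := Submodule K L) ⟨⁅x, z⁆, ⟨z, rfl⟩, rfl⟩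
    rw [he]
    exact sub_mem h2 h1
  haveI : Module.Finite K
      ↥(Submodule.map (LieAlgebra.ad K L y) (LinearMap.range (LieAlgebra.ad K L x))) :=
    Module.Finite.map _ _
  haveI : FiniteDimensional K ↥S := Submodule.finiteDimensional_sup _ _
  exact Submodule.finiteDimensional_of_le h

/-- `Δ(L)` is an ideal of `L`. -/
theorem Delta_isIdeal {K L : Type*} [Field K] [LieRing L] [LieAlgebra K L] :
    ∃ I : LieIdeal K L, (I : Set L) = Delta K L := by
  exact ⟨⟨⟨⟨⟨Delta K L, fun ha hb => Delta_add_mem ha hb⟩, Delta_zero_mem⟩,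
    fun c _ ha => Delta_smul_mem c ha⟩, fun {y x} hx => Delta_lie_mem y hx⟩, rfl⟩
end

section
/- Let L be a Lie algebra and H a subalgebra of finite codimension in L. Then Δ(H) = Δ(L) ∩ H. -/
/-- The map `z ↦ ⁅z, x⁆` as a linear map. -/
def adMap (K L : Type*) [Field K] [LieRing L] [LieAlgebra K L] (x : L) :
    L →ₗ[K] L where
  toFun z := ⁅z, x⁆
  map_add' a b := add_lie a b x
  map_smul' c a := smul_lie c a x

lemma adIm_eq_range (K L : Type*) [Field K] [LieRing L] [LieAlgebra K L] (x : L) :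
    adIm K L x = LinearMap.range (adMap K L x) := by
  have h : {y : L | ∃ z : L, y = ⁅z, x⁆} = Set.range (adMap K L x) := by
    ext y; simp [adMap, eq_comm]
  rw [adIm, h, ← LinearMap.coe_range, Submodule.span_eq]

lemma map_adIm {K L : Type*} [Field K] [LieRing L] [LieAlgebra K L]
    (H : LieSubalgebra K L) (x : H) :
    Submodule.map H.toSubmodule.subtype (adIm K H x)
      = Submodule.map (adMap K L (x : L)) H.toSubmodule := by
  have hcomp : (adMap K L (x : L)).comp H.toSubmodule.subtype
      = H.toSubmodule.subtype.comp (adMap K H x) := by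
    ext z; rfl
  rw [adIm_eq_range, ← LinearMap.range_comp, ← hcomp, LinearMap.range_comp,
    Submodule.range_subtype]

/-- if `H` is a subalgebra of finite codimension in `L`,
then `Δ(H) = Δ(L) ∩ H`. -/
theorem Delta_subalgebra {K L : Type*} [Field K] [LieRing L] [LieAlgebra K L]
    (H : LieSubalgebra K L)
    (hcodim : FiniteDimensional K (L ⧸ H.toSubmodule)) :
    ∀ x : H, x ∈ Delta K H ↔ (x : L) ∈ Delta K L := by
  intro x
  constructor
  · intro hx
    have hx : Module.Finite K ↥(adIm K H x) := hx
    obtain ⟨W, hW⟩ := Submodule.exists_isCompl H.toSubmodule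
    have hWfd : FiniteDimensional K W :=
      Module.Finite.equiv (Submodule.quotientEquivOfIsCompl H.toSubmodule W hW)
    have hmapH : FiniteDimensional K
        ↥(Submodule.map (adMap K L (x : L)) H.toSubmodule) := by
      rw [← map_adIm]
      infer_instance
    have hmapW : FiniteDimensional K
        ↥(Submodule.map (adMap K L (x : L)) W) := by
      infer_instance
    have htop : Submodule.map (adMap K L (x : L)) H.toSubmodule
        ⊔ Submodule.map (adMap K L (x : L)) W
          = LinearMap.range (adMap K L (x : L)) := by
      rw [← Submodule.map_sup, hW.sup_eq_top, Submodule.map_top]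
    show Module.Finite K ↥(adIm K L (x : L))
    rw [adIm_eq_range, ← htop]
    infer_instance
  · intro hx
    have hx : Module.Finite K ↥(adIm K L (x : L)) := hx
    have hle : Submodule.map H.toSubmodule.subtype (adIm K H x)
        ≤ adIm K L (x : L) := by
      rw [map_adIm, adIm_eq_range, ← Submodule.map_top]
      exact Submodule.map_mono le_top
    have : FiniteDimensional K
        ↥(Submodule.map H.toSubmodule.subtype (adIm K H x)) :=
      Submodule.finiteDimensional_of_le hle
    exact Module.Finite.equiv
      (Submodule.equivMapOfInjective H.toSubmodule.subtype
        (Submodule.injective_subtype _) (adIm K H x)).symm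
end

section
/- Let L be a Lie algebra and I a finite-dimensional ideal of L. Then Δ(L/I) = (Δ(L) + I)/I. -/
/-!
`[L/I, x + I]` is the image of `[L, x]` under the projection `L → L/I`, and the kernel of that
restricted projection lies in `I`. So one is finite-dimensional if the other is, once `I` is.
-/

theorem Submodule.fg_of_fg_map_mkQ {R M : Type*} [Ring R] [AddCommGroup M] [Module R M]
    (N : Submodule R M) [IsNoetherian R N] {s : Submodule R M} (hs : (s.map N.mkQ).FG) :
    s.FG :=
  fg_of_fg_map_of_fg_inf_ker N.mkQ hs <| by
    rw [N.ker_mkQ]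
    exact isNoetherian_submodule_right.mp ‹_› s

section

variable {K L : Type*} [Field K] [LieRing L] [LieAlgebra K L] (I : LieIdeal K L)

theorem adIm_map_mkQ (x : L) :
    (adIm K L x).map I.toSubmodule.mkQ = adIm K (L ⧸ I) (LieSubmodule.Quotient.mk x) := by
  rw [adIm, adIm, Submodule.map_span]
  congr 1
  ext y
  constructor
  · rintro ⟨_, ⟨z, rfl⟩, rfl⟩
    exact ⟨LieSubmodule.Quotient.mk z, rfl⟩
  · rintro ⟨z, rfl⟩
    obtain ⟨w, rfl⟩ := LieSubmodule.Quotient.surjective_mk' I z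
    exact ⟨⁅w, x⁆, ⟨w, rfl⟩, rfl⟩

theorem mk_mem_Delta_quotient {x : L} (hx : x ∈ Delta K L) :
    (LieSubmodule.Quotient.mk x : L ⧸ I) ∈ Delta K (L ⧸ I) := by
  have : Module.Finite K (adIm K L x) := hx
  change Module.Finite K (adIm K (L ⧸ I) _)
  rw [← adIm_map_mkQ]
  infer_instance

theorem mem_Delta_of_mk_mem_Delta_quotient [Module.Finite K I] {x : L}
    (hx : (LieSubmodule.Quotient.mk x : L ⧸ I) ∈ Delta K (L ⧸ I)) : x ∈ Delta K L := by
  have : IsNoetherian K I.toSubmodule := IsNoetherian.iff_fg.mpr ‹Module.Finite K I›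
  have hmap : Module.Finite K (adIm K (L ⧸ I) (LieSubmodule.Quotient.mk x)) := hx
  rw [← adIm_map_mkQ, Module.Finite.iff_fg] at hmap
  exact Module.Finite.iff_fg.mpr (I.toSubmodule.fg_of_fg_map_mkQ hmap)

end

/-- if `I` is a finite-dimensional ideal of `L`, then
`Δ(L/I) = (Δ(L) + I)/I`. -/
theorem Delta_quotient {K L : Type*} [Field K] [LieRing L] [LieAlgebra K L]
    (I : LieIdeal K L) (hI : Module.Finite K I) :
    Delta K (L ⧸ I) =
      LieSubmodule.Quotient.mk (N := I) ''
        {w : L | ∃ d ∈ Delta K L, ∃ i ∈ I, w = d + i} := by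
  ext xq
  obtain ⟨x, rfl⟩ := LieSubmodule.Quotient.surjective_mk' I xq
  constructor
  · intro hx
    exact ⟨x, ⟨x, mem_Delta_of_mk_mem_Delta_quotient I hx, 0, I.zero_mem, (add_zero x).symm⟩, rfl⟩
  · rintro ⟨_, ⟨d, hd, i, hi, rfl⟩, hw⟩
    have hmk : LieSubmodule.Quotient.mk' I (d + i) = LieSubmodule.Quotient.mk' I d := by
      rw [map_add, (LieSubmodule.Quotient.mk_eq_zero I).mpr hi, add_zero]
    rw [← hw]
    change LieSubmodule.Quotient.mk' I (d + i) ∈ _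
    rw [hmk]
    exact mk_mem_Delta_quotient I hd
end

section
/- Let V be a vector space over a field K and T ⊆ V a subset stable under multiplication by scalars such that there exist v_1, …, v_n ∈ V with V = {t + λ_1 v_1 + ⋯ + λ_n v_n : t ∈ T, λ_i ∈ K} (i.e., T has codimension at most n). Then the linear span of T equals the set of 4^n-fold sums of elements of T: span_K(T) = {t_1 + ⋯ + t_{4^n} : t_i ∈ T}. -/
section Aux

variable {K V : Type*} [Field K] [AddCommGroup V] [Module K V]

/-- `w` is a sum of `m` elements of `T`. -/
def InSums (T : Set V) (m : ℕ) (w : V) : Prop :=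
  ∃ f : Fin m → V, (∀ i, f i ∈ T) ∧ w = ∑ i, f i

lemma inSums_cast {T : Set V} {a b : ℕ} (h : a = b) {w : V} (hw : InSums T a w) :
    InSums T b w := by subst h; exact hw

lemma inSums_add {T : Set V} {a b : ℕ} {x y : V}
    (hx : InSums T a x) (hy : InSums T b y) : InSums T (a + b) (x + y) := by
  obtain ⟨f, hf, rfl⟩ := hx
  obtain ⟨g, hg, rfl⟩ := hy
  refine ⟨Fin.append f g, ?_, ?_⟩
  · intro i
    rcases Nat.lt_or_ge i.val a with h | h
    · have : i = Fin.castAdd b ⟨i.val, h⟩ := by ext; rfl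
      rw [this, Fin.append_left]; exact hf _
    · have hb : i.val - a < b := by omega
      have : i = Fin.natAdd a ⟨i.val - a, hb⟩ := by ext; simp; omega
      rw [this, Fin.append_right]; exact hg _
  · rw [Fin.sum_univ_add]
    simp [Fin.append_left, Fin.append_right]

lemma inSums_smul {T : Set V} (hT : ∀ (c : K), ∀ t ∈ T, c • t ∈ T)
    {a : ℕ} {x : V} (c : K) (hx : InSums T a x) : InSums T a (c • x) := by
  obtain ⟨f, hf, rfl⟩ := hx
  exact ⟨fun i => c • f i, fun i => hT c _ (hf i), by rw [Finset.smul_sum]⟩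

lemma inSums_zero {T : Set V} (h0 : (0 : V) ∈ T) (a : ℕ) : InSums T a (0 : V) :=
  ⟨fun _ => 0, fun _ => h0, by simp⟩

lemma inSums_mono {T : Set V} (h0 : (0 : V) ∈ T) {a b : ℕ} (hab : a ≤ b)
    {w : V} (hw : InSums T a w) : InSums T b w := by
  have := inSums_add hw (inSums_zero h0 (b - a))
  rw [add_zero] at this
  exact inSums_cast (by omega) this

lemma inSums_split {T : Set V} {a b : ℕ} {w : V} (hw : InSums T (a + b) w) :
    ∃ x y, InSums T a x ∧ InSums T b y ∧ w = x + y := by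
  obtain ⟨f, hf, rfl⟩ := hw
  exact ⟨∑ i : Fin a, f (Fin.castAdd b i), ∑ i : Fin b, f (Fin.natAdd a i),
    ⟨_, fun i => hf _, rfl⟩, ⟨_, fun i => hf _, rfl⟩, Fin.sum_univ_add f⟩

lemma inSums_to_span {T : Set V} {a : ℕ} {w : V} (hw : InSums T a w) :
    w ∈ Submodule.span K T := by
  obtain ⟨f, hf, rfl⟩ := hw
  exact Submodule.sum_mem _ fun i _ => Submodule.subset_span (hf i)

lemma span_to_inSums {T : Set V} (hT : ∀ (c : K), ∀ t ∈ T, c • t ∈ T)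
    {w : V} (hw : w ∈ Submodule.span K T) : ∃ a, InSums T a w := by
  induction hw using Submodule.span_induction with
  | mem x hx => exact ⟨1, fun _ => x, fun _ => hx, by simp⟩
  | zero => exact ⟨0, fun i => 0, fun i => i.elim0, by simp⟩
  | add x y hx hy ihx ihy =>
    obtain ⟨a, ha⟩ := ihx; obtain ⟨b, hb⟩ := ihy
    exact ⟨a + b, inSums_add ha hb⟩
  | smul c x hx ihx =>
    obtain ⟨a, ha⟩ := ihx
    exact ⟨a, inSums_smul hT c ha⟩

/-- Key lemma: if every element of the span of `T` is an `m`-fold sum plus a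
multiple of `v`, and `v` itself lies in the span, then `v` is a `3m`-fold sum. -/
lemma key_three {T : Set V} (hT : ∀ (c : K), ∀ t ∈ T, c • t ∈ T)
    (h0 : (0 : V) ∈ T) {m : ℕ} (hm : 1 ≤ m) {v : V}
    (hdec : ∀ x : V, x ∈ Submodule.span K T →
      ∃ p, InSums T m p ∧ ∃ c : K, x = p + c • v)
    (hv : v ∈ Submodule.span K T) : InSums T (3 * m) v := by
  obtain ⟨k, hk⟩ := span_to_inSums hT hv
  clear hv
  induction k using Nat.strong_induction_on with
  | _ k ih =>
    by_cases hk3 : k ≤ 3 * m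
    · exact inSums_mono h0 hk3 hk
    · push_neg at hk3
      obtain ⟨x, y, hx, hy, hxy⟩ := inSums_split (a := m + 1) (b := k - (m + 1))
        (inSums_cast (by omega) hk)
      obtain ⟨p, hp, c, hc⟩ := hdec x (inSums_to_span hx)
      by_cases hc1 : c = 1
      · -- then y = -p and v = x - p
        subst hc1
        rw [one_smul] at hc
        have hveq : v = x + (-1 : K) • p := by
          have : v = p + v + y := by rw [← hc, ← hxy]
          have hy0 : y = -p := by
            have := this
            abel_nf at this ⊢
            linear_combination (norm := abel) -this
          rw [hxy, hy0]; simp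
        rw [hveq]
        exact inSums_mono h0 (by omega)
          (inSums_add hx (inSums_smul hT (-1 : K) hp))
      · -- (1 - c) • v = p + y
        have h1c : (1 - c) ≠ 0 := sub_ne_zero.mpr (Ne.symm hc1)
        have hveq : v = (1 - c)⁻¹ • (p + y) := by
          have h1 : (1 - c) • v = p + y := by
            rw [sub_smul, one_smul]
            have : v = p + c • v + y := by rw [← hc, ← hxy]
            linear_combination (norm := module) this
          rw [← h1, smul_smul, inv_mul_cancel₀ h1c, one_smul]
        have hnew : InSums T (k - 1) v := by
          rw [hveq]
          exact inSums_smul hT _ (inSums_cast (by omega) (inSums_add hp hy))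
        exact ih (k - 1) (by omega) hnew

lemma main_key : ∀ (n : ℕ) (T : Set V), (∀ (c : K), ∀ t ∈ T, c • t ∈ T) →
    ∀ v : Fin n → V,
    (∀ w : V, ∃ t ∈ T, ∃ lam : Fin n → K, w = t + ∑ i, lam i • v i) →
    (Submodule.span K T : Set V) = {w : V | InSums T (4 ^ n) w} := by
  intro n
  induction n with
  | zero =>
    intro T hT v hcod
    ext w
    simp only [SetLike.mem_coe, Set.mem_setOf_eq]
    constructor
    · intro _
      obtain ⟨t, ht, lam, hlam⟩ := hcod w
      simp only [Finset.univ_eq_empty, Finset.sum_empty, add_zero] at hlam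
      exact ⟨fun _ => t, fun _ => ht, by simpa using hlam⟩
    · exact inSums_to_span
  | succ n ih =>
    intro T hT v hcod
    set vl := v (Fin.last n) with hvl
    -- T is nonempty, hence contains 0
    have h0 : (0 : V) ∈ T := by
      obtain ⟨t, ht, -⟩ := hcod 0
      simpa using hT 0 t ht
    set S : Set V := {x : V | ∃ t ∈ T, ∃ c : K, x = t + c • vl} with hSdef
    have hTS : T ⊆ S := fun t ht => ⟨t, ht, 0, by simp⟩
    have hS : ∀ (c : K), ∀ s ∈ S, c • s ∈ S := by
      rintro c s ⟨t, ht, d, rfl⟩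
      exact ⟨c • t, hT c t ht, c * d, by rw [smul_add, smul_smul]⟩
    have hScod : ∀ w : V, ∃ s ∈ S, ∃ lam : Fin n → K,
        w = s + ∑ i, lam i • (v ∘ Fin.castSucc) i := by
      intro w
      obtain ⟨t, ht, lam, hlam⟩ := hcod w
      refine ⟨t + lam (Fin.last n) • vl, ⟨t, ht, lam (Fin.last n), rfl⟩,
        fun i => lam (Fin.castSucc i), ?_⟩
      rw [hlam, Fin.sum_univ_castSucc (fun i => lam i • v i)]
      simp only [Function.comp]
      abel
    have hspanS := ih S hS (v ∘ Fin.castSucc) hScod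
    set m := 4 ^ n with hm
    have hm1 : 1 ≤ m := Nat.one_le_pow _ _ (by norm_num)
    -- every element of span T decomposes as (m-fold sum in T) + c • vl
    have hdec : ∀ x : V, x ∈ Submodule.span K T →
        ∃ p, InSums T m p ∧ ∃ c : K, x = p + c • vl := by
      intro x hx
      have hxS : x ∈ (Submodule.span K S : Set V) :=
        Submodule.span_mono hTS hx
      rw [hspanS] at hxS
      obtain ⟨f, hf, rfl⟩ := hxS
      choose t ht c hc using hf
      refine ⟨∑ i, t i, ⟨t, ht, rfl⟩, ∑ i, c i, ?_⟩
      rw [Finset.sum_smul]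
      rw [← Finset.sum_add_distrib]
      exact Finset.sum_congr rfl fun i _ => hc i
    ext w
    simp only [SetLike.mem_coe, Set.mem_setOf_eq]
    constructor
    · intro hw
      obtain ⟨p, hp, c, hc⟩ := hdec w hw
      by_cases hc0 : c = 0
      · subst hc0
        rw [zero_smul, add_zero] at hc
        rw [hc]
        exact inSums_mono h0 (Nat.pow_le_pow_right (by norm_num) (Nat.le_succ n)) hp
      · have hvspan : vl ∈ Submodule.span K T := by
          have : vl = c⁻¹ • (w - p) := by
            rw [hc]; rw [smul_sub]
            simp [smul_smul, inv_mul_cancel₀ hc0]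
          rw [this]
          exact Submodule.smul_mem _ _
            (Submodule.sub_mem _ hw (inSums_to_span hp))
        have h3 := key_three hT h0 hm1 hdec hvspan
        have := inSums_add hp (inSums_smul hT c h3)
        rw [← hc] at this
        exact inSums_cast (by rw [pow_succ]; omega) this
    · exact inSums_to_span

end Aux

/-- if `T ⊆ V` is stable under scalar multiplication and has
codimension at most `n` (witnessed by `v₁, …, v_n`), then
`span_K T = 4^n · T`, the set of `4^n`-fold sums of elements of `T`. -/
theorem span_eq_iterated_sums {K V : Type*} [Field K] [AddCommGroup V] [Module K V]
    (T : Set V) (hT : ∀ (c : K), ∀ t ∈ T, c • t ∈ T)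
    (n : ℕ) (v : Fin n → V)
    (hcod : ∀ w : V, ∃ t ∈ T, ∃ lam : Fin n → K, w = t + ∑ i, lam i • v i) :
    (Submodule.span K T : Set V) =
      {w : V | ∃ f : Fin (4 ^ n) → V, (∀ i, f i ∈ T) ∧ w = ∑ i, f i} := by
  exact main_key n T hT v hcod
end

section
/- Let K be a field of characteristic 2 and P = K[X,Y] the Hamiltonian Poisson algebra H_2(K) with bracket {f,g} = (∂f/∂X)(∂g/∂Y) − (∂f/∂Y)(∂g/∂X). Then P is solvable of derived length 3: δ_3(P) = 0. -/
open MvPolynomial in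
private lemma pd_comm {K : Type*} [CommRing K] (i j : Fin 2)
    (f : MvPolynomial (Fin 2) K) :
    pderiv i (pderiv j f) = pderiv j (pderiv i f) := by
  induction f using MvPolynomial.induction_on with
  | C a => simp
  | add p q hp hq => simp [hp, hq]
  | mul_X p k hp =>
    simp only [pderiv_mul, map_add, hp, pderiv_X, Pi.single_apply,
      apply_ite (pderiv i), apply_ite (pderiv j), pderiv_one, map_zero, ite_self]
    ring

open MvPolynomial in
private lemma pd_self {K : Type*} [CommRing K] [CharP K 2] (i : Fin 2)
    (f : MvPolynomial (Fin 2) K) : pderiv i (pderiv i f) = 0 := by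
  induction f using MvPolynomial.induction_on with
  | C a => simp
  | add p q hp hq => simp [hp, hq]
  | mul_X p k hp =>
    simp only [pderiv_mul, map_add, hp, pderiv_X, Pi.single_apply,
      apply_ite (pderiv i), pderiv_one, map_zero, zero_mul, mul_zero,
      add_zero, zero_add, mul_ite, mul_one]
    split <;> simp [CharTwo.add_self_eq_zero]

open MvPolynomial in
private lemma pd_comm01 {K : Type*} [CommRing K]
    (f : MvPolynomial (Fin 2) K) :
    pderiv (0 : Fin 2) (pderiv 1 f) = pderiv 1 (pderiv 0 f) :=
  pd_comm 0 1 f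

open MvPolynomial in
/-- for `char K = 2`, the Hamiltonian Poisson algebra
`H₂(K) = K[X,Y]` with bracket `{f,g} = ∂f/∂X·∂g/∂Y − ∂f/∂Y·∂g/∂X`
is solvable of derived length 3: `δ₃ = 0`. -/
theorem hamiltonian_solvable {K : Type*} [Field K] [CharP K 2]
    (P : PoissonStr K (MvPolynomial (Fin 2) K))
    (hP : ∀ f g : MvPolynomial (Fin 2) K,
      P.bracket f g = pderiv 0 f * pderiv 1 g - pderiv 1 f * pderiv 0 g) :
    P.derived 3 = ⊥ := by
  set W : Submodule K (MvPolynomial (Fin 2) K) :=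
    LinearMap.ker ((pderiv (1 : Fin 2)).toLinearMap ∘ₗ (pderiv (0 : Fin 2)).toLinearMap) with hW
  set V : Submodule K (MvPolynomial (Fin 2) K) :=
    LinearMap.ker (pderiv (0 : Fin 2)).toLinearMap ⊓
      LinearMap.ker (pderiv (1 : Fin 2)).toLinearMap with hV
  have h1 : P.derived 1 ≤ W := by
    show P.sBr ⊤ ⊤ ≤ W
    rw [PoissonStr.sBr, Submodule.span_le]
    rintro z ⟨f, -, g, -, rfl⟩
    simp only [SetLike.mem_coe, hW, LinearMap.mem_ker, LinearMap.coe_comp,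
      Function.comp_apply, Derivation.coeFn_coe]
    rw [hP]
    simp only [map_sub, pderiv_mul, map_add, pd_self, pd_comm01,
      zero_mul, mul_zero, add_zero, zero_add]
    ring
  have h2 : P.derived 2 ≤ V := by
    show P.sBr (P.derived 1) (P.derived 1) ≤ V
    rw [PoissonStr.sBr, Submodule.span_le]
    rintro z ⟨f, hf, g, hg, rfl⟩
    have hf' := h1 hf
    have hg' := h1 hg
    simp only [hW, LinearMap.mem_ker, LinearMap.coe_comp, Function.comp_apply,
      Derivation.coeFn_coe] at hf' hg'
    have hf0 : pderiv (0 : Fin 2) (pderiv 1 f) = 0 := by rw [pd_comm01]; exact hf'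
    have hg0 : pderiv (0 : Fin 2) (pderiv 1 g) = 0 := by rw [pd_comm01]; exact hg'
    simp only [SetLike.mem_coe, hV, Submodule.mem_inf, LinearMap.mem_ker,
      Derivation.coeFn_coe]
    rw [hP]
    constructor <;>
    · simp only [map_sub, pderiv_mul, pd_self, hf', hg', hf0, hg0,
        zero_mul, mul_zero, add_zero, zero_add, sub_zero, sub_self]
  have h3 : P.derived 3 ≤ ⊥ := by
    show P.sBr (P.derived 2) (P.derived 2) ≤ ⊥
    rw [PoissonStr.sBr, Submodule.span_le]
    rintro z ⟨f, hf, g, hg, rfl⟩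
    have hf' := h2 hf
    have hg' := h2 hg
    simp only [hV, Submodule.mem_inf, LinearMap.mem_ker, Derivation.coeFn_coe] at hf' hg'
    simp only [SetLike.mem_coe, Submodule.mem_bot]
    simp [hP, hf'.1, hf'.2]
  exact le_bot_iff.mp h3
end
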